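/- Let c be a real number, λ > 0, and β0, β1 real with β0·β1 < λ and √λ·|β0−β1| < λ − β0β1. Then a* > 1−c if and only if β0 − β1 < −((λ−β0β1)/√λ)·tanh(√λ·(1−c)), and a* < 0 if and only if β0 − β1 > ((λ−β0β1)/√λ)·tanh(√λ·(1−c)). -/

import Mathlib

/-!
`aStar` is `(artanh x + √λ (1 - c)) / (2√λ)` with `x = √λ (β1 - β0) / (λ - β0 β1)`, and the
hypothesis `√λ |β0 - β1| < λ - β0 β1` says exactly that `|x| < 1`. There the formula `artanh` of the
statement is Mathlib's `Real.artanh`, the inverse of the increasing bijection `tanh : ℝ → (-1, 1)`,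
so both comparisons of `aStar` turn into comparisons of `x` with `tanh (±√λ (1 - c))`.
-/

/-- The real inverse hyperbolic tangent, `artanh x = (1/2) ln((1+x)/(1-x))`,
the inverse of `tanh` on `(-1, 1)`. -/
noncomputable def artanh (x : ℝ) : ℝ := (1 / 2) * Real.log ((1 + x) / (1 - x))

/-- The critical point `a*`, the unique zero of `g`. -/
noncomputable def aStar (c β0 β1 lam : ℝ) : ℝ :=
  (1 / (2 * Real.sqrt lam)) * artanh (Real.sqrt lam * (β1 - β0) / (lam - β0 * β1))
    + (1 - c) / 2

open Set

theorem artanh_eq_real_artanh {x : ℝ} (hx : x ∈ Icc (-1) 1) : artanh x = Real.artanh x :=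
  (Real.artanh_eq_half_log hx).symm

theorem Real.tanh_mem_Ioo (t : ℝ) : Real.tanh t ∈ Ioo (-1) 1 :=
  ⟨Real.neg_one_lt_tanh t, Real.tanh_lt_one t⟩

theorem Real.lt_artanh_iff {x : ℝ} (hx : x ∈ Ioo (-1) 1) (t : ℝ) :
    t < Real.artanh x ↔ Real.tanh t < x := by
  rw [← Real.artanh_lt_artanh_iff (Real.tanh_mem_Ioo t) hx, Real.artanh_tanh]

theorem Real.artanh_lt_iff {x : ℝ} (hx : x ∈ Ioo (-1) 1) (t : ℝ) :
    Real.artanh x < t ↔ x < Real.tanh t := by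
  rw [← Real.artanh_lt_artanh_iff hx (Real.tanh_mem_Ioo t), Real.artanh_tanh]

theorem aStar_eq (c β0 β1 : ℝ) {lam : ℝ} (hlam : 0 < lam) :
    aStar c β0 β1 lam =
      (artanh (√lam * (β1 - β0) / (lam - β0 * β1)) + √lam * (1 - c)) / (2 * √lam) := by
  have hs : √lam ≠ 0 := (Real.sqrt_pos.2 hlam).ne'
  rw [aStar]
  field_simp

theorem lt_mul_div_iff_div_mul_lt {K : Type*} [Field K] [LinearOrder K] [IsStrictOrderedRing K]
    {a b c d : K} (hb : 0 < b) (hc : 0 < c) : a < b * d / c ↔ c / b * a < d := by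
  rw [lt_div_iff₀ hc, div_mul_eq_mul_div, div_lt_iff₀ hb, mul_comm a c, mul_comm d b]

theorem stmt16 (c lam β0 β1 : ℝ) (hlam : 0 < lam) (hgt : β0 * β1 < lam)
    (hlt : Real.sqrt lam * |β0 - β1| < lam - β0 * β1) :
    (1 - c < aStar c β0 β1 lam ↔
      β0 - β1 < -(((lam - β0 * β1) / Real.sqrt lam) * Real.tanh (Real.sqrt lam * (1 - c)))) ∧
    (aStar c β0 β1 lam < 0 ↔
      ((lam - β0 * β1) / Real.sqrt lam) * Real.tanh (Real.sqrt lam * (1 - c)) < β0 - β1) := by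
  have hs : 0 < √lam := Real.sqrt_pos.2 hlam
  have hD : 0 < lam - β0 * β1 := sub_pos.2 hgt
  have hx : √lam * (β1 - β0) / (lam - β0 * β1) ∈ Ioo (-1) 1 := by
    rwa [mem_Ioo, ← abs_lt, abs_div, abs_of_pos hD, div_lt_one hD, abs_mul, abs_of_pos hs,
      abs_sub_comm]
  have h2s : 0 < 2 * √lam := by positivity
  rw [aStar_eq c β0 β1 hlam, artanh_eq_real_artanh (Ioo_subset_Icc_self hx),
    lt_div_iff₀ h2s, div_lt_iff₀ h2s, zero_mul, ← lt_sub_iff_add_lt, zero_sub]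
  constructor
  · rw [← sub_lt_iff_lt_add, show (1 - c) * (2 * √lam) - √lam * (1 - c) = √lam * (1 - c) by ring,
      Real.lt_artanh_iff hx, lt_mul_div_iff_div_mul_lt hs hD]
    constructor <;> intro h <;> linarith
  · rw [Real.artanh_lt_iff hx, Real.tanh_neg, lt_neg, ← neg_div, ← mul_neg, neg_sub,
      lt_mul_div_iff_div_mul_lt hs hD]
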